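/- Let m ∈ ℕ, let E_1, …, E_m, F be Banach spaces, let A : E_1 × ⋯ × E_m → F be a continuous m-linear operator and let Ã : E_1** × ⋯ × E_m** → F** be a genuine separately weak*-weak* continuous bidual extension of A. Fix i ∈ {1,…,m} and elements z_j** ∈ E_j** for j ≠ i, and let T : E_i → F be the linear operator determined by J_F(T(x)) = Ã(z_1**,…,z_{i−1}**, J_{E_i}(x), z_{i+1}**,…,z_m**) (well defined because Ã takes values in J_F(F)). Then T is a bounded weakly compact operator and T**(x**) = Ã(z_1**,…,z_{i−1}**, x**, z_{i+1}**,…,z_m**) for every x** ∈ E_i**. -/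

import Mathlib

universe u v

noncomputable section

open Filter Topology NormedSpace

/-- The adjoint of a continuous linear operator between normed spaces:  `f ↦ f ∘ T`. -/
def dualOp {E : Type u} {F : Type v} [NormedAddCommGroup E] [NormedSpace ℝ E]
    [NormedAddCommGroup F] [NormedSpace ℝ F] (T : E →L[ℝ] F) : StrongDual ℝ F →L[ℝ] StrongDual ℝ E :=
  (ContinuousLinearMap.compL ℝ E F ℝ).flip T

/-- The second adjoint `T** : E** → F**` of a continuous linear operator `T : E → F`. -/
def bidualOp {E : Type u} {F : Type v} [NormedAddCommGroup E] [NormedSpace ℝ E]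
    [NormedAddCommGroup F] [NormedSpace ℝ F] (T : E →L[ℝ] F) :
    StrongDual ℝ (StrongDual ℝ E) →L[ℝ] StrongDual ℝ (StrongDual ℝ F) :=
  dualOp (dualOp T)

/-- A map between biduals is weak*-weak* continuous if, for every `f` in the dual of `F`,
the scalar map `xbb ↦ Φ xbb f` is continuous for the weak* topology of `E**`. -/
def WeakStarWeakStarContinuous {E : Type u} {F : Type v} [NormedAddCommGroup E]
    [NormedSpace ℝ E] [NormedAddCommGroup F] [NormedSpace ℝ F]
    (Φ : StrongDual ℝ (StrongDual ℝ E) → StrongDual ℝ (StrongDual ℝ F)) : Prop :=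
  ∀ f : StrongDual ℝ F, Continuous fun x : WeakDual ℝ (StrongDual ℝ E) => Φ x f

/-- Helly-type interpolation: any element of the bidual agrees with some element of the
canonical image on finitely many functionals. -/
lemma helly_aux {E : Type u} [NormedAddCommGroup E] [NormedSpace ℝ E]
    (xbb : StrongDual ℝ (StrongDual ℝ E)) (s : Finset (StrongDual ℝ E)) :
    ∃ x : E, ∀ f ∈ s, f x = xbb f := by
  classical
  set ι := {f // f ∈ s}
  set L : E →ₗ[ℝ] (ι → ℝ) := LinearMap.pi (fun j => (j.1 : E →ₗ[ℝ] ℝ)) with hL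
  set v : ι → ℝ := fun j => xbb j.1 with hv
  have hvmem : v ∈ LinearMap.range L := by
    by_contra h
    obtain ⟨φ, hφv, hφmap⟩ :=
      Submodule.exists_dual_map_eq_bot_of_notMem (p := LinearMap.range L) h inferInstance
    set c : ι → ℝ := fun j => φ (fun k => if j = k then 1 else 0) with hc
    have hφ : ∀ w : ι → ℝ, φ w = ∑ j, w j * c j := by
      intro w
      conv_lhs => rw [pi_eq_sum_univ w]
      rw [map_sum]
      simp [c, smul_eq_mul]
    have hker : ∀ w ∈ LinearMap.range L, φ w = 0 := by
      intro w hw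
      have : φ w ∈ Submodule.map φ (LinearMap.range L) := ⟨w, hw, rfl⟩
      rw [hφmap] at this
      simpa using this
    set g : StrongDual ℝ E := ∑ j, c j • (j.1 : StrongDual ℝ E) with hg
    have hg0 : g = 0 := by
      ext x
      have := hker (L x) ⟨x, rfl⟩
      rw [hφ] at this
      simpa [g, ContinuousLinearMap.sum_apply, L, mul_comm] using this
    have : xbb g = φ v := by
      rw [hφ, hg]
      simp [v, mul_comm]
    rw [hg0] at this
    simp at this
    exact hφv this.symm
  obtain ⟨x, hx⟩ := hvmem
  refine ⟨x, fun f hf => ?_⟩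
  exact congrFun hx ⟨f, hf⟩

lemma denseRange_J (E : Type u) [NormedAddCommGroup E] [NormedSpace ℝ E] :
    DenseRange (fun x : E =>
      show WeakBilin (topDualPairing ℝ (StrongDual ℝ E)) from inclusionInDoubleDual ℝ E x) := by
  classical
  set B := topDualPairing ℝ (StrongDual ℝ E) with hBdef
  have hB : Function.Injective B := by
    intro a b hab
    ext f
    exact congrFun (congrArg DFunLike.coe hab) f
  have hemb : IsInducing fun (x : WeakBilin B) (y : StrongDual ℝ E) => B x y :=
    (WeakBilin.isEmbedding hB).toIsInducing
  intro xbb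
  rw [mem_closure_iff]
  intro u hu hxu
  rw [hemb.isOpen_iff] at hu
  obtain ⟨t, ht, rfl⟩ := hu
  have hxt : (fun y => B xbb y) ∈ t := hxu
  obtain ⟨I, w, hw, hsub⟩ := isOpen_pi_iff.1 ht _ hxt
  obtain ⟨x, hx⟩ := helly_aux xbb I
  refine ⟨inclusionInDoubleDual ℝ E x, ?_, Set.mem_range_self x⟩
  apply hsub
  intro f hf
  show B (inclusionInDoubleDual ℝ E x) f ∈ w f
  have heval : B (inclusionInDoubleDual ℝ E x) f = B xbb f := by
    exact hx f hf
  rw [heval]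
  exact (hw f hf).2

/-- If `Aext` is a genuine separately weak*-weak* continuous bidual extension of `A`, then
fixing all variables but the `i`-th one at elements of the biduals, the induced map is the
second adjoint of a (bounded, weakly compact) linear operator `T : E i → F` determined by
`J_F (T x) = Aext (z 1, …, J (x), …, z m)`. -/
theorem bidualExtension_fix_bidual_coordinates {m : ℕ} {E : Fin m → Type u}
    [∀ i, NormedAddCommGroup (E i)] [∀ i, NormedSpace ℝ (E i)] [∀ i, CompleteSpace (E i)]
    {F : Type v} [NormedAddCommGroup F] [NormedSpace ℝ F] [CompleteSpace F]
    (A : ContinuousMultilinearMap ℝ E F)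
    (Aext : ContinuousMultilinearMap ℝ (fun i => StrongDual ℝ (StrongDual ℝ (E i))) (StrongDual ℝ (StrongDual ℝ F)))
    (hext : ∀ z : ∀ i, E i,
      Aext (fun i => inclusionInDoubleDual ℝ (E i) (z i)) = inclusionInDoubleDual ℝ F (A z))
    (hgenuine : ∀ w : ∀ i, StrongDual ℝ (StrongDual ℝ (E i)),
      Aext w ∈ Set.range (inclusionInDoubleDual ℝ F))
    (hw : ∀ (j : Fin m) (z : ∀ i, StrongDual ℝ (StrongDual ℝ (E i))),
      WeakStarWeakStarContinuous fun xbb => Aext (Function.update z j xbb))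
    (i : Fin m) (z : ∀ k, StrongDual ℝ (StrongDual ℝ (E k))) :
    ∃ T : E i →L[ℝ] F,
      (∀ x : E i,
        inclusionInDoubleDual ℝ F (T x) =
          Aext (Function.update z i (inclusionInDoubleDual ℝ (E i) x))) ∧
      (∀ xbb : StrongDual ℝ (StrongDual ℝ (E i)),
        bidualOp T xbb ∈ Set.range (inclusionInDoubleDual ℝ F)) ∧
      (∀ xbb : StrongDual ℝ (StrongDual ℝ (E i)),
        bidualOp T xbb = Aext (Function.update z i xbb)) := by
  classical
  set J := inclusionInDoubleDual ℝ (E i)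
  set JF := inclusionInDoubleDual ℝ F
  have hJFinj : Function.Injective JF := (inclusionInDoubleDualLi ℝ (E := F)).injective
  set S : StrongDual ℝ (StrongDual ℝ (E i)) →L[ℝ] StrongDual ℝ (StrongDual ℝ F) := Aext.toContinuousLinearMap z i with hS
  have hSapp : ∀ v, S v = Aext (Function.update z i v) := fun v => rfl
  -- the map `x ↦ T x` obtained from genuineness
  have hch : ∀ x : E i, JF ((hgenuine (Function.update z i (J x))).choose) =
      Aext (Function.update z i (J x)) :=
    fun x => (hgenuine (Function.update z i (J x))).choose_spec
  set Tfun : E i → F := fun x => (hgenuine (Function.update z i (J x))).choose with hTfun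
  have hT : ∀ x, JF (Tfun x) = S (J x) := fun x => (hch x).trans (hSapp (J x)).symm
  have hadd : ∀ x y, Tfun (x + y) = Tfun x + Tfun y := by
    intro x y
    apply hJFinj
    rw [map_add, hT, hT, hT, map_add, map_add]
  have hsmul : ∀ (c : ℝ) (x), Tfun (c • x) = c • Tfun x := by
    intro c x
    apply hJFinj
    rw [map_smul, hT, hT, map_smul, map_smul]
  set T0 : E i →ₗ[ℝ] F :=
    { toFun := Tfun, map_add' := hadd, map_smul' := hsmul } with hT0
  have hcont : Continuous T0 := by
    have hiso : Isometry JF := (inclusionInDoubleDualLi ℝ (E := F)).isometry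
    rw [hiso.isEmbedding.isInducing.continuous_iff]
    have : JF ∘ T0 = S ∘ J := funext hT
    rw [this]
    exact S.continuous.comp (inclusionInDoubleDual ℝ (E i)).continuous
  set T : E i →L[ℝ] F := ⟨T0, hcont⟩ with hTdef
  have hTapp : ∀ x, JF (T x) = Aext (Function.update z i (J x)) := fun x => hch x
  -- the key identity
  have hkey : ∀ xbb : StrongDual ℝ (StrongDual ℝ (E i)),
      bidualOp T xbb = Aext (Function.update z i xbb) := by
    intro xbb
    ext f
    -- two weak*-continuous functions agreeing on a dense range
    have hdense := denseRange_J (E i)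
    have hc1 : Continuous fun y : WeakBilin (topDualPairing ℝ (StrongDual ℝ (E i))) =>
        topDualPairing ℝ (StrongDual ℝ (E i)) y ((dualOp T) f) :=
      WeakBilin.eval_continuous _ _
    have hc2 : Continuous fun y : WeakBilin (topDualPairing ℝ (StrongDual ℝ (E i))) =>
        Aext (Function.update z i y) f := hw i z f
    have heq : (fun y : WeakBilin (topDualPairing ℝ (StrongDual ℝ (E i))) =>
          topDualPairing ℝ (StrongDual ℝ (E i)) y ((dualOp T) f)) =
        fun y => Aext (Function.update z i y) f := by
      refine hdense.equalizer hc1 hc2 ?_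
      funext x
      show ((J x : StrongDual ℝ (StrongDual ℝ (E i)))) ((dualOp T) f) = Aext (Function.update z i (J x)) f
      rw [← hTapp x]
      rfl
    have := congrFun heq xbb
    exact this
  exact ⟨T, hTapp, fun xbb => (hkey xbb) ▸ hgenuine _, hkey⟩

end
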